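/- arXiv:1203.1400 — 3 statements merged into one kernel-verified Lean document; each statement's English description precedes it below -/
import Mathlib

section
/- Let n ≥ 2 be an integer and κ > 0. Let (X, d, μ) be a metric measure space satisfying the upper volume bound μ(B(x, r)) ≤ κ⁻¹ rⁿ for all x ∈ X and all r > 0. Then there exists a constant C₁ > 0, depending only on n and κ, such that for every integrable function f : X → [0, ∞) and every x ∈ X with Mf(x) < ∞, the Riesz potential satisfies I₁f(x) = ∫_X f(y) / d(x, y)^{n−1} dμ(y) ≤ C₁ · (Mf(x))^{(n−1)/n} · ‖f‖₁^{1/n}. -/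
open MeasureTheory Metric ENNReal

/-- The Riesz potential of order 1 on an `n`-dimensional metric measure space:
`I₁ f (x) = ∫_X f(y) / d(x,y)^{n-1} dμ(y)`. -/
noncomputable def rieszPotential {X : Type*} [MetricSpace X] [MeasurableSpace X]
    (μ : Measure X) (n : ℕ) (f : X → ℝ) (x : X) : ℝ≥0∞ :=
  ∫⁻ y, ENNReal.ofReal (f y) / edist x y ^ (n - 1) ∂μ

/-- The centered Hardy–Littlewood maximal function
`M f (x) = sup_{r > 0} μ(B(x,r))⁻¹ ∫_{B(x,r)} f dμ`. -/
noncomputable def maximalFn {X : Type*} [MetricSpace X] [MeasurableSpace X]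
    (μ : Measure X) (f : X → ℝ) (x : X) : ℝ≥0∞ :=
  ⨆ (r : ℝ) (_ : 0 < r), (μ (ball x r))⁻¹ * ∫⁻ y in ball x r, ENNReal.ofReal (f y) ∂μ

/-!
Hedberg's argument. Split `I₁ f (x)` at a radius `R`. Outside `B(x, R)` the kernel is at most
`R^{1-n}`, which contributes `R^{1-n} ‖f‖₁`. Inside, cover `B(x, R) \ {x}` by the dyadic annuli
`B(x, R/2^j) \ B(x, R/2^{j+1})`: on the `j`-th one the kernel is at most `(R/2^{j+1})^{1-n}`,
while `∫_{B(x, R/2^j)} f ≤ M f (x) κ⁻¹ (R/2^j)^n`; summing the geometric series gives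
`2^n κ⁻¹ M f (x) R`. The choice `R^n = ‖f‖₁ / M f (x)` makes both terms equal to
`M f (x)^{(n-1)/n} ‖f‖₁^{1/n}`.
-/

open Filter Topology Set

lemma exists_div_two_pow_succ_le_lt {d R : ℝ} (hd : 0 < d) (hdR : d < R) :
    ∃ j : ℕ, R / 2 ^ (j + 1) ≤ d ∧ d < R / 2 ^ j := by
  obtain ⟨m, hm₁, hm₂⟩ := exists_mem_Ioc_zpow (div_pos (hd.trans hdR) hd) one_lt_two
  rw [lt_div_iff₀ hd] at hm₁
  rw [div_le_iff₀ hd] at hm₂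
  lift m to ℕ using by
    by_contra! h
    have : (2 : ℝ) ^ (m + 1) ≤ 1 := zpow_le_one_of_nonpos₀ one_le_two (by omega)
    nlinarith
  refine ⟨m, (div_le_iff₀' (by positivity)).2 ?_, (lt_div_iff₀' (by positivity)).2 ?_⟩
  · exact_mod_cast hm₂
  · exact_mod_cast hm₁

lemma tsum_ofReal_div_two_pow (a : ℝ) :
    ∑' j : ℕ, ENNReal.ofReal (a / 2 ^ j) = ENNReal.ofReal (2 * a) := by
  have h (j : ℕ) : ENNReal.ofReal (a / 2 ^ j) = ENNReal.ofReal a * 2⁻¹ ^ j := by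
    rw [div_eq_mul_inv, ← inv_pow, ENNReal.ofReal_mul' (by positivity), ofReal_pow (by positivity),
      ofReal_inv_of_pos two_pos, ofReal_ofNat]
  rw [tsum_congr h, ENNReal.tsum_mul_left, ENNReal.tsum_geometric_two, mul_comm,
    ENNReal.ofReal_mul zero_le_two, ofReal_ofNat]

lemma exists_radius_mul_add_inv_pow_mul_eq {A I : ℝ≥0∞} (hA₀ : A ≠ 0) (hA : A ≠ ⊤) (hI₀ : I ≠ 0)
    (hI : I ≠ ⊤) {n : ℕ} (hn : n ≠ 0) {c : ℝ} (hc : 0 ≤ c) :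
    ∃ R > 0, A * ENNReal.ofReal (c * R) + (ENNReal.ofReal R ^ (n - 1))⁻¹ * I =
      ENNReal.ofReal (c + 1) * A ^ (((n : ℝ) - 1) / n) * I ^ ((1 : ℝ) / n) := by
  obtain ⟨a, ha, rfl⟩ : ∃ a, 0 < a ∧ A = ENNReal.ofReal a :=
    ⟨A.toReal, toReal_pos hA₀ hA, (ofReal_toReal hA).symm⟩
  obtain ⟨i, hi, rfl⟩ : ∃ i, 0 < i ∧ I = ENNReal.ofReal i :=
    ⟨I.toReal, toReal_pos hI₀ hI, (ofReal_toReal hI).symm⟩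
  set R := (i / a) ^ ((1 : ℝ) / n) with hR_def
  have hR : 0 < R := by positivity
  have hRn : R ^ n = i / a := by
    rw [hR_def, one_div, Real.rpow_inv_natCast_pow (by positivity) hn]
  have hbalance : i / R ^ (n - 1) = a * R := by
    rw [div_eq_iff (by positivity), mul_assoc, ← pow_succ', Nat.sub_add_cancel (by omega), hRn]
    field_simp
  have haR : a * R = a ^ (((n : ℝ) - 1) / n) * i ^ ((1 : ℝ) / n) := by
    rw [hR_def, Real.div_rpow hi.le ha.le, sub_div, div_self (by positivity),
      Real.rpow_sub ha, Real.rpow_one]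
    ring
  refine ⟨R, hR, ?_⟩
  rw [← ofReal_pow hR.le, ← ofReal_inv_of_pos (by positivity), ← ENNReal.ofReal_mul ha.le,
    ← ENNReal.ofReal_mul (by positivity), inv_mul_eq_div, hbalance,
    ← ENNReal.ofReal_add (by positivity) (by positivity), ofReal_rpow_of_pos ha,
    ofReal_rpow_of_pos hi, mul_assoc, ← ENNReal.ofReal_mul (by positivity),
    ← ENNReal.ofReal_mul (by positivity), ← haR]
  congr 1
  ring

section

variable {X : Type*} [MetricSpace X]

lemma ball_diff_singleton_subset_iUnion_annulus (x : X) (R : ℝ) :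
    ball x R \ {x} ⊆ ⋃ j : ℕ, ball x (R / 2 ^ j) \ ball x (R / 2 ^ (j + 1)) := by
  rintro y ⟨hyR, hyx : y ≠ x⟩
  obtain ⟨j, hj₁, hj₂⟩ := exists_div_two_pow_succ_le_lt (dist_pos.2 hyx) (mem_ball.1 hyR)
  exact mem_iUnion.2 ⟨j, hj₂, hj₁.not_gt⟩

variable [MeasurableSpace X] (μ : Measure X) (f : X → ℝ) (x : X)

lemma measure_singleton_eq_zero_of_ball_le {K : ℝ} {n : ℕ} (hn : n ≠ 0)
    (hvol : ∀ r, 0 < r → μ (ball x r) ≤ ENNReal.ofReal (K * r ^ n)) : μ {x} = 0 := by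
  have hlim : Tendsto (fun r : ℝ => ENNReal.ofReal (K * r ^ n)) (𝓝[>] 0) (𝓝 0) := by
    have hcont : Continuous fun r : ℝ => ENNReal.ofReal (K * r ^ n) :=
      ENNReal.continuous_ofReal.comp (by fun_prop)
    simpa [hn] using (hcont.tendsto 0).mono_left nhdsWithin_le_nhds
  refine le_antisymm (ge_of_tendsto hlim ?_) zero_le
  filter_upwards [self_mem_nhdsWithin] with r hr
  exact (measure_mono (singleton_subset_iff.2 (mem_ball_self hr))).trans (hvol r hr)

lemma setLIntegral_ball_le_maximalFn_mul {r : ℝ} (hr : 0 < r) (hμ : μ (ball x r) ≠ ⊤) :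
    ∫⁻ y in ball x r, ENNReal.ofReal (f y) ∂μ ≤ maximalFn μ f x * μ (ball x r) := by
  rcases eq_or_ne (μ (ball x r)) 0 with h₀ | h₀
  · simp [setLIntegral_measure_zero _ _ h₀]
  calc ∫⁻ y in ball x r, ENNReal.ofReal (f y) ∂μ
      = (μ (ball x r))⁻¹ * (∫⁻ y in ball x r, ENNReal.ofReal (f y) ∂μ) * μ (ball x r) := by
        rw [mul_right_comm, ENNReal.inv_mul_cancel h₀ hμ, one_mul]
    _ ≤ maximalFn μ f x * μ (ball x r) := by
        gcongr
        exact le_iSup₂ (f := fun (r : ℝ) (_ : 0 < r) =>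
          (μ (ball x r))⁻¹ * ∫⁻ y in ball x r, ENNReal.ofReal (f y) ∂μ) r hr

lemma maximalFn_eq_zero_iff (hμ : ∀ r, 0 < r → μ (ball x r) ≠ ⊤) :
    maximalFn μ f x = 0 ↔ ∫⁻ y, ENNReal.ofReal (f y) ∂μ = 0 := by
  constructor
  · intro h
    have hball (k : ℕ) : ∫⁻ y in ball x (k + 1), ENNReal.ofReal (f y) ∂μ = 0 :=
      le_antisymm ((setLIntegral_ball_le_maximalFn_mul μ f x (by positivity)
        (hμ _ (by positivity))).trans_eq (by simp [h])) zero_le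
    rw [← setLIntegral_univ, ← iUnion_ball_nat_succ x]
    exact le_antisymm ((lintegral_iUnion_le _ _).trans_eq (by simp [hball])) zero_le
  · intro h
    refine le_antisymm (iSup₂_le fun r _ => ?_) zero_le
    have hball : ∫⁻ y in ball x r, ENNReal.ofReal (f y) ∂μ = 0 :=
      le_antisymm (h ▸ setLIntegral_le_lintegral _ _) zero_le
    simp [hball]

lemma setLIntegral_div_edist_pow_le {s : Set X} (hs : MeasurableSet s) {ρ : ℝ} (hρ : 0 < ρ)
    (hρs : ∀ y ∈ s, ρ ≤ dist x y) (g : X → ℝ≥0∞) (k : ℕ) :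
    ∫⁻ y in s, g y / edist x y ^ k ∂μ ≤ (ENNReal.ofReal ρ ^ k)⁻¹ * ∫⁻ y in s, g y ∂μ := by
  calc ∫⁻ y in s, g y / edist x y ^ k ∂μ
      ≤ ∫⁻ y in s, (ENNReal.ofReal ρ ^ k)⁻¹ * g y ∂μ := by
        refine setLIntegral_mono' hs fun y hy => ?_
        rw [ENNReal.div_eq_inv_mul, edist_dist]
        gcongr
        exact hρs y hy
    _ = (ENNReal.ofReal ρ ^ k)⁻¹ * ∫⁻ y in s, g y ∂μ :=
        lintegral_const_mul' _ _ (by simp [hρ])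

lemma inv_ofReal_half_pow_mul_ofReal_pow {r : ℝ} (hr : 0 < r) (K : ℝ) {n : ℕ} (hn : n ≠ 0) :
    (ENNReal.ofReal (r / 2) ^ (n - 1))⁻¹ * ENNReal.ofReal (K * r ^ n) =
      ENNReal.ofReal (2 ^ (n - 1) * K * r) := by
  obtain ⟨k, rfl⟩ := Nat.exists_eq_add_one_of_ne_zero hn
  rw [Nat.add_sub_cancel, ← ofReal_pow (by positivity), ← ofReal_inv_of_pos (by positivity),
    ← ENNReal.ofReal_mul (by positivity)]
  congr 1
  rw [div_pow]
  field_simp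
  ring

variable [OpensMeasurableSpace X]

lemma setLIntegral_ball_div_edist_pow_le {K : ℝ} {n : ℕ} (hn : n ≠ 0)
    (hvol : ∀ r, 0 < r → μ (ball x r) ≤ ENNReal.ofReal (K * r ^ n))
    {R : ℝ} (hR : 0 < R) :
    ∫⁻ y in ball x R, ENNReal.ofReal (f y) / edist x y ^ (n - 1) ∂μ ≤
      maximalFn μ f x * ENNReal.ofReal (2 ^ n * K * R) := by
  set g := fun y => ENNReal.ofReal (f y) / edist x y ^ (n - 1)
  set r : ℕ → ℝ := fun j => R / 2 ^ j
  have hr (j : ℕ) : 0 < r j := by positivity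
  have hr_succ (j : ℕ) : r (j + 1) = r j / 2 := by simp only [r]; ring
  have hannulus (j : ℕ) : ∫⁻ y in ball x (r j) \ ball x (r (j + 1)), g y ∂μ ≤
      maximalFn μ f x * ENNReal.ofReal (2 ^ (n - 1) * K * R / 2 ^ j) := calc
    _ ≤ (ENNReal.ofReal (r (j + 1)) ^ (n - 1))⁻¹ *
          ∫⁻ y in ball x (r j) \ ball x (r (j + 1)), ENNReal.ofReal (f y) ∂μ :=
        setLIntegral_div_edist_pow_le μ x (measurableSet_ball.diff measurableSet_ball) (hr _)
          (fun y hy => by simpa [dist_comm] using hy.2) _ _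
    _ ≤ (ENNReal.ofReal (r (j + 1)) ^ (n - 1))⁻¹ *
          (maximalFn μ f x * ENNReal.ofReal (K * r j ^ n)) := by
        gcongr
        refine (lintegral_mono_set sdiff_subset).trans ?_
        refine (setLIntegral_ball_le_maximalFn_mul μ f x (hr j)
          (ne_top_of_le_ne_top ofReal_ne_top (hvol _ (hr j)))).trans ?_
        gcongr
        exact hvol _ (hr j)
    _ = maximalFn μ f x * ENNReal.ofReal (2 ^ (n - 1) * K * R / 2 ^ j) := by
        rw [mul_left_comm, hr_succ, inv_ofReal_half_pow_mul_ofReal_pow (hr j) K hn, mul_div_assoc]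
  -- at `y = x` the integrand is `ofReal (f x) / 0 = ⊤`, so the centre has to be `μ`-null
  have hnull : μ {x} = 0 := measure_singleton_eq_zero_of_ball_le μ x hn hvol
  calc ∫⁻ y in ball x R, g y ∂μ
      = ∫⁻ y in ball x R \ {x}, g y ∂μ := setLIntegral_congr (sdiff_null_ae_eq_self hnull).symm
    _ ≤ ∫⁻ y in ⋃ j, ball x (r j) \ ball x (r (j + 1)), g y ∂μ :=
        lintegral_mono_set (ball_diff_singleton_subset_iUnion_annulus x R)
    _ ≤ ∑' j, ∫⁻ y in ball x (r j) \ ball x (r (j + 1)), g y ∂μ := lintegral_iUnion_le _ _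
    _ ≤ ∑' j, maximalFn μ f x * ENNReal.ofReal (2 ^ (n - 1) * K * R / 2 ^ j) :=
        ENNReal.tsum_le_tsum hannulus
    _ = maximalFn μ f x * ENNReal.ofReal (2 ^ n * K * R) := by
        rw [ENNReal.tsum_mul_left, tsum_ofReal_div_two_pow]
        congr 2
        rw [← mul_assoc, ← mul_assoc, ← pow_succ', Nat.sub_add_cancel (by omega)]

lemma setLIntegral_compl_ball_div_edist_pow_le (k : ℕ) {R : ℝ} (hR : 0 < R) :
    ∫⁻ y in (ball x R)ᶜ, ENNReal.ofReal (f y) / edist x y ^ k ∂μ ≤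
      (ENNReal.ofReal R ^ k)⁻¹ * ∫⁻ y, ENNReal.ofReal (f y) ∂μ := by
  refine (setLIntegral_div_edist_pow_le μ x measurableSet_ball.compl hR
    (fun y hy => by simpa [dist_comm] using hy) _ k).trans ?_
  exact mul_le_mul_right (setLIntegral_le_lintegral _ _) _

theorem rieszPotential_le_maximalFn_mul_add {K : ℝ} {n : ℕ} (hn : n ≠ 0)
    (hvol : ∀ r, 0 < r → μ (ball x r) ≤ ENNReal.ofReal (K * r ^ n))
    {R : ℝ} (hR : 0 < R) :
    rieszPotential μ n f x ≤ maximalFn μ f x * ENNReal.ofReal (2 ^ n * K * R) +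
      (ENNReal.ofReal R ^ (n - 1))⁻¹ * ∫⁻ y, ENNReal.ofReal (f y) ∂μ := by
  rw [rieszPotential, ← lintegral_add_compl _ (measurableSet_ball (x := x) (ε := R))]
  exact add_le_add (setLIntegral_ball_div_edist_pow_le μ f x hn hvol hR)
    (setLIntegral_compl_ball_div_edist_pow_le μ f x _ hR)

end

/-- on a metric measure space whose balls satisfy the upper volume bound
`μ(B(x,r)) ≤ κ⁻¹ rⁿ`, the Riesz potential of order 1 satisfies
`I₁ f (x) ≤ C₁ (M f (x))^{(n-1)/n} ‖f‖₁^{1/n}`, with `C₁` depending only on `n` and `κ`. -/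
theorem riesz_potential_le_maximal_rpow (n : ℕ) (hn : 2 ≤ n) (κ : ℝ) (hκ : 0 < κ) :
    ∃ C₁ : ℝ, 0 < C₁ ∧
      ∀ (X : Type*) [MetricSpace X] [MeasurableSpace X] [BorelSpace X] (μ : Measure X),
        (∀ (x : X) (r : ℝ), 0 < r → μ (ball x r) ≤ ENNReal.ofReal (κ⁻¹ * r ^ n)) →
        ∀ f : X → ℝ, Integrable f μ → (∀ y, 0 ≤ f y) →
          ∀ x : X, maximalFn μ f x < ⊤ →
            rieszPotential μ n f x ≤
              ENNReal.ofReal C₁ * maximalFn μ f x ^ (((n : ℝ) - 1) / n) *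
                (∫⁻ y, ENNReal.ofReal (f y) ∂μ) ^ ((1 : ℝ) / n) := by
  refine ⟨2 ^ n * κ⁻¹ + 1, by positivity, ?_⟩
  intro X _ _ _ μ hvol f hf _ x hM
  have hn₀ : n ≠ 0 := by omega
  have hsplit (R : ℝ) (hR : 0 < R) := rieszPotential_le_maximalFn_mul_add μ f x hn₀ (hvol x) hR
  have hzero_iff := maximalFn_eq_zero_iff μ f x fun r hr =>
    ne_top_of_le_ne_top ofReal_ne_top (hvol x r hr)
  by_cases hA : maximalFn μ f x = 0
  · calc rieszPotential μ n f x ≤ 0 := by simpa [hA, hzero_iff.1 hA] using hsplit 1 one_pos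
      _ ≤ _ := zero_le
  obtain ⟨R, hR, hR_eq⟩ := exists_radius_mul_add_inv_pow_mul_eq hA hM.ne (mt hzero_iff.2 hA)
    hf.lintegral_lt_top.ne hn₀ (c := 2 ^ n * κ⁻¹) (by positivity)
  exact (hsplit R hR).trans_eq hR_eq
end

section
/- Let (X, μ) be a measure space with 0 < μ(X) < ∞, let u : X → ℝ be integrable, and let k ∈ ℤ. Define the truncation g_k = min(max(|u| − 2^{k−1}, 0), 2^{k−1}) and its average ḡ_k = μ(X)⁻¹ ∫_X g_k dμ. Then: (i) 0 ≤ g_k ≤ |u|/2 pointwise, so ḡ_k ≤ ‖u‖₁ / (2 μ(X)); (ii) g_k = 2^{k−1} on D_k = {x : |u(x)| > 2^k}, and consequently D_k ⊆ {x : |g_k(x) − ḡ_k| > 2^{k−3}} ∪ {x : ḡ_k > 2^{k−3}}; (iii) if 2^k ≥ 4 ‖u‖₁ / μ(X), then μ(D_k) ≤ μ({x : |g_k(x) − ḡ_k| > 2^{k−3}}). -/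
open MeasureTheory ENNReal

/-- properties of the dyadic truncation
`g_k = min(max(|u| − 2^{k−1}, 0), 2^{k−1})` of an integrable function `u` on a finite
measure space, and of its average `ḡ_k = μ(X)⁻¹ ∫ g_k dμ`:
(i) `0 ≤ g_k ≤ |u|/2` pointwise and `ḡ_k ≤ ‖u‖₁ / (2 μ(X))`;
(ii) `g_k = 2^{k−1}` on `D_k = {|u| > 2^k}`, and
`D_k ⊆ {|g_k − ḡ_k| > 2^{k−3}} ∪ {ḡ_k > 2^{k−3}}`;
(iii) if `2^k ≥ 4 ‖u‖₁ / μ(X)` then `μ(D_k) ≤ μ({|g_k − ḡ_k| > 2^{k−3}})`. -/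
theorem dyadic_truncation_properties {X : Type*} [MeasurableSpace X] (μ : Measure X)
    (hμ0 : 0 < μ Set.univ) (hμfin : μ Set.univ < ⊤)
    (u : X → ℝ) (hu : Integrable u μ) (k : ℤ)
    (g : X → ℝ) (hg : ∀ x, g x = min (max (|u x| - 2 ^ (k - 1)) 0) (2 ^ (k - 1)))
    (gbar : ℝ) (hgbar : gbar = (μ Set.univ).toReal⁻¹ * ∫ x, g x ∂μ) :
    (∀ x, 0 ≤ g x ∧ g x ≤ |u x| / 2) ∧
    gbar ≤ (∫ x, |u x| ∂μ) / (2 * (μ Set.univ).toReal) ∧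
    (∀ x, (2 : ℝ) ^ k < |u x| → g x = 2 ^ (k - 1)) ∧
    {x | (2 : ℝ) ^ k < |u x|} ⊆
      {x | (2 : ℝ) ^ (k - 3) < |g x - gbar|} ∪ {x | (2 : ℝ) ^ (k - 3) < gbar} ∧
    (4 * (∫ x, |u x| ∂μ) / (μ Set.univ).toReal ≤ 2 ^ k →
      μ {x | (2 : ℝ) ^ k < |u x|} ≤ μ {x | (2 : ℝ) ^ (k - 3) < |g x - gbar|}) := by

  have hμr : 0 < (μ Set.univ).toReal := ENNReal.toReal_pos hμ0.ne' hμfin.ne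
  set c : ℝ := 2 ^ (k - 1) with hc
  have hcpos : 0 < c := by positivity
  have hc2 : 2 * c = (2 : ℝ) ^ k := by
    rw [hc, ← zpow_one_add₀ (two_ne_zero : (2:ℝ) ≠ 0)]
    norm_num
  have htdef : (2 : ℝ) ^ (k - 3) = (2 : ℝ) ^ k / 8 := by
    rw [zpow_sub₀ (two_ne_zero : (2:ℝ) ≠ 0)]
    norm_num
  have h1 : ∀ x, 0 ≤ g x ∧ g x ≤ |u x| / 2 := by
    intro x
    have hax : 0 ≤ |u x| := abs_nonneg _
    rw [hg x]
    refine ⟨le_min (le_max_right _ _) hcpos.le, ?_⟩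
    rcases le_or_gt (|u x|) c with h | h
    · calc min (max (|u x| - c) 0) c ≤ max (|u x| - c) 0 := min_le_left _ _
        _ = 0 := max_eq_right (by linarith)
        _ ≤ |u x| / 2 := by linarith
    · rcases le_or_gt (|u x|) (2 * c) with h2 | h2
      · calc min (max (|u x| - c) 0) c ≤ max (|u x| - c) 0 := min_le_left _ _
          _ = |u x| - c := max_eq_left (by linarith)
          _ ≤ |u x| / 2 := by linarith
      · calc min (max (|u x| - c) 0) c ≤ c := min_le_right _ _
          _ ≤ |u x| / 2 := by linarith
  have hg_meas : AEStronglyMeasurable g μ := by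
    have hcont : Continuous fun t : ℝ => min (max (|t| - c) 0) c := by fun_prop
    have : AEStronglyMeasurable (fun x => min (max (|u x| - c) 0) c) μ :=
      hcont.comp_aestronglyMeasurable hu.aestronglyMeasurable
    exact this.congr (Filter.Eventually.of_forall fun x => (hg x).symm)
  have hu2 : Integrable (fun x => |u x| / 2) μ := (hu.abs).div_const 2
  have hgint : Integrable g μ := by
    refine hu2.mono' hg_meas (Filter.Eventually.of_forall fun x => ?_)
    rw [Real.norm_eq_abs, abs_of_nonneg (h1 x).1]
    exact (h1 x).2
  have hIpos : 0 ≤ ∫ x, |u x| ∂μ := integral_nonneg fun x => abs_nonneg _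
  have hintle : ∫ x, g x ∂μ ≤ (∫ x, |u x| ∂μ) / 2 := by
    rw [← integral_div]
    exact integral_mono hgint hu2 fun x => (h1 x).2
  have h2 : gbar ≤ (∫ x, |u x| ∂μ) / (2 * (μ Set.univ).toReal) := by
    rw [hgbar]
    have := mul_le_mul_of_nonneg_left hintle (inv_nonneg.2 hμr.le)
    calc (μ Set.univ).toReal⁻¹ * ∫ x, g x ∂μ
        ≤ (μ Set.univ).toReal⁻¹ * ((∫ x, |u x| ∂μ) / 2) := this
      _ = (∫ x, |u x| ∂μ) / (2 * (μ Set.univ).toReal) := by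
          rw [inv_mul_eq_div, div_div]
  have h3 : ∀ x, (2 : ℝ) ^ k < |u x| → g x = c := by
    intro x hx
    rw [hg x]
    have h2c : 2 * c < |u x| := by rw [hc2]; exact hx
    rw [max_eq_left (by linarith), min_eq_right (by linarith)]
  have h4 : {x | (2 : ℝ) ^ k < |u x|} ⊆
      {x | (2 : ℝ) ^ (k - 3) < |g x - gbar|} ∪ {x | (2 : ℝ) ^ (k - 3) < gbar} := by
    intro x hx
    rcases le_or_gt gbar ((2:ℝ) ^ (k - 3)) with hb | hb
    · left
      have hgc := h3 x hx
      have ht : (2:ℝ) ^ (k - 3) < g x - gbar := by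
        rw [hgc, htdef]
        rw [htdef] at hb
        have : 2 * c = (2:ℝ) ^ k := hc2
        linarith
      exact lt_of_lt_of_le ht (le_abs_self _)
    · right; exact hb
  refine ⟨h1, h2, h3, h4, ?_⟩
  intro hk
  have hgbar_le : gbar ≤ (2:ℝ) ^ (k - 3) := by
    rw [htdef]
    have h8 : 4 * (∫ x, |u x| ∂μ) / (μ Set.univ).toReal ≤ 2 ^ k := hk
    have : (∫ x, |u x| ∂μ) / (2 * (μ Set.univ).toReal) ≤ (2:ℝ) ^ k / 8 := by
      rw [div_le_iff₀ (by positivity)] at h8 ⊢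
      nlinarith [hμr]
    linarith [h2]
  refine measure_mono fun x hx => ?_
  rcases h4 hx with h | h
  · exact h
  · exact absurd h (not_lt.2 hgbar_le)
end

section
/- Let (X, μ) be a measure space with 0 < μ(X) < ∞, let p > 1 be a real number, let C > 0, let u : X → ℝ be measurable, let k₀ ∈ ℤ, and let (m_k)_{k ∈ ℤ} be nonnegative real numbers. Suppose that μ({x : |u(x)| > 2^k}) ≤ C · 2^{−pk} m_k^p for all integers k > k₀, and μ({x : |u(x)| > 2^k}) ≤ C · 2^{−pk} m_k^p + μ(X) for all integers k ≤ k₀. Then there exists a constant A > 0, depending only on p, such that (∫_X |u|^p dμ)^{1/p} ≤ A C^{1/p} · Σ_{k ∈ ℤ} m_k + A · μ(X)^{1/p} · 2^{k₀}. -/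
/-! Cut the range of `|u|` at `2^(k₀+1)` and dyadically above it:
`|u|^p ≤ 2^((k₀+1)p) + ∑_{k > k₀} 2^((k+1)p) 𝟙{|u| > 2^k}`. Integrating, the first term costs
`2^((k₀+1)p) μ(X)` and the weak bound turns the `k`-th term into `2^p C m_k^p`. Taking `p`-th
roots, which is subadditive since `1/p ≤ 1`, and using `∑ m_k^p ≤ (∑ m_k)^p` gives the claim
with `A = 2`. -/

open MeasureTheory ENNReal

theorem ENNReal.tsum_rpow_le_rpow_tsum {ι : Type*} (a : ι → ℝ≥0∞) {p : ℝ} (hp : 1 ≤ p) :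
    ∑' i, a i ^ p ≤ (∑' i, a i) ^ p := by
  have split (x : ℝ≥0∞) : x ^ p = x * x ^ (p - 1) := by
    conv_lhs => rw [show p = 1 + (p - 1) by ring]
    rw [rpow_add_of_nonneg _ _ zero_le_one (by linarith), rpow_one]
  calc ∑' i, a i ^ p = ∑' i, a i * a i ^ (p - 1) := by simp only [← split]
    _ ≤ ∑' i, a i * (∑' j, a j) ^ (p - 1) := by
      gcongr with i
      exact ENNReal.le_tsum i
    _ = (∑' i, a i) ^ p := by rw [ENNReal.tsum_mul_right, split]

theorem lintegral_ofReal_abs_rpow_le_dyadic {X : Type*} [MeasurableSpace X] (μ : Measure X)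
    {u : X → ℝ} (hu : Measurable u) {p : ℝ} (hp : 0 ≤ p) (j : ℤ) :
    ∫⁻ x, ENNReal.ofReal (|u x| ^ p) ∂μ ≤
      ENNReal.ofReal ((2 : ℝ) ^ j) ^ p * μ Set.univ +
        ∑' n : ℕ, ENNReal.ofReal ((2 : ℝ) ^ (j + n + 1)) ^ p * μ {x | (2 : ℝ) ^ (j + n) < |u x|} := by
  set S : ℕ → Set X := fun n => {x | (2 : ℝ) ^ (j + n) < |u x|}
  have hS (n : ℕ) : MeasurableSet (S n) := measurableSet_lt measurable_const hu.abs
  have pointwise (x : X) : ENNReal.ofReal (|u x| ^ p) ≤ ENNReal.ofReal ((2 : ℝ) ^ j) ^ p +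
      ∑' n : ℕ, (S n).indicator (fun _ => ENNReal.ofReal ((2 : ℝ) ^ (j + n + 1)) ^ p) x := by
    rw [← ofReal_rpow_of_nonneg (abs_nonneg _) hp]
    rcases le_or_gt |u x| (2 ^ j) with hx | hx
    · exact le_add_right (by gcongr)
    obtain ⟨k, hk, hk'⟩ :=
      exists_mem_Ioc_zpow ((zpow_pos two_pos j).trans hx) (one_lt_two (α := ℝ))
    obtain ⟨n, rfl⟩ : ∃ n : ℕ, k = j + n := by
      have := (zpow_lt_zpow_iff_right₀ (one_lt_two (α := ℝ))).1 (hx.trans_le hk')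
      exact ⟨(k - j).toNat, by omega⟩
    refine le_add_left (le_trans ?_ (ENNReal.le_tsum n))
    rw [Set.indicator_of_mem (show x ∈ S n from hk)]
    gcongr
  calc ∫⁻ x, ENNReal.ofReal (|u x| ^ p) ∂μ
      ≤ ∫⁻ x, (ENNReal.ofReal ((2 : ℝ) ^ j) ^ p +
          ∑' n : ℕ, (S n).indicator (fun _ => ENNReal.ofReal ((2 : ℝ) ^ (j + n + 1)) ^ p) x) ∂μ :=
        lintegral_mono pointwise
    _ = _ := by
      rw [lintegral_add_left measurable_const, lintegral_const,
        lintegral_tsum fun n => (measurable_const.indicator (hS n)).aemeasurable]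
      simp only [lintegral_indicator_const (hS _)]
      rfl

theorem two_zpow_add_one_rpow_mul_two_rpow_neg (k : ℤ) (p : ℝ) :
    ((2 : ℝ) ^ (k + 1)) ^ p * (2 : ℝ) ^ (-(p * k)) = 2 ^ p := by
  rw [← Real.rpow_intCast, ← Real.rpow_mul zero_le_two, ← Real.rpow_add two_pos]
  push_cast
  ring_nf

theorem tsum_dyadic_weight_le {p C : ℝ} (hp : 0 ≤ p) (hC : 0 ≤ C) {m : ℤ → ℝ}
    (hm : ∀ k, 0 ≤ m k) {b : ℤ → ℝ≥0∞} (j : ℤ)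
    (hb : ∀ k, j ≤ k → b k ≤ ENNReal.ofReal (C * (2 : ℝ) ^ (-(p * k)) * m k ^ p)) :
    ∑' n : ℕ, ENNReal.ofReal ((2 : ℝ) ^ (j + n + 1)) ^ p * b (j + n) ≤
      2 ^ p * (ENNReal.ofReal C * ∑' k, ENNReal.ofReal (m k) ^ p) := by
  have term (k : ℤ) (hk : j ≤ k) : ENNReal.ofReal ((2 : ℝ) ^ (k + 1)) ^ p * b k ≤
      2 ^ p * (ENNReal.ofReal C * ENNReal.ofReal (m k) ^ p) := by
    calc ENNReal.ofReal ((2 : ℝ) ^ (k + 1)) ^ p * b k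
        ≤ ENNReal.ofReal ((2 : ℝ) ^ (k + 1)) ^ p *
            ENNReal.ofReal (C * (2 : ℝ) ^ (-(p * k)) * m k ^ p) := by
          gcongr; exact hb k hk
      _ = ENNReal.ofReal (2 ^ p * (C * m k ^ p)) := by
          rw [ofReal_rpow_of_nonneg (by positivity) hp, ← ofReal_mul (by positivity),
            ← two_zpow_add_one_rpow_mul_two_rpow_neg k p]
          ring_nf
      _ = 2 ^ p * (ENNReal.ofReal C * ENNReal.ofReal (m k) ^ p) := by
          rw [ofReal_mul (by positivity), ofReal_mul hC, ofReal_rpow_of_nonneg (hm k) hp,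
            ← ofReal_rpow_of_nonneg zero_le_two hp, ofReal_ofNat]
  calc ∑' n : ℕ, ENNReal.ofReal ((2 : ℝ) ^ (j + n + 1)) ^ p * b (j + n)
      ≤ ∑' n : ℕ, 2 ^ p * (ENNReal.ofReal C * ENNReal.ofReal (m (j + n)) ^ p) :=
        ENNReal.tsum_le_tsum fun n => term _ (by omega)
    _ = 2 ^ p * (ENNReal.ofReal C * ∑' n : ℕ, ENNReal.ofReal (m (j + n)) ^ p) := by
        rw [ENNReal.tsum_mul_left, ENNReal.tsum_mul_left]
    _ ≤ _ := by
      gcongr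
      exact tsum_comp_le_tsum_of_injective ((add_right_injective j).comp Nat.cast_injective) _

theorem ENNReal.rpow_mul_rpow_one_div {p : ℝ} (hp : 0 < p) (x y : ℝ≥0∞) :
    (x ^ p * y) ^ (1 / p) = x * y ^ (1 / p) := by
  rw [mul_rpow_of_nonneg _ _ (by positivity), one_div, rpow_rpow_inv hp.ne']

/-- upgrading a dyadic family of weak-type bounds to a strong `L^p` bound.
If `μ({|u| > 2^k}) ≤ C 2^{−pk} m_k^p` for `k > k₀` and
`μ({|u| > 2^k}) ≤ C 2^{−pk} m_k^p + μ(X)` for `k ≤ k₀`, then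
`‖u‖_p ≤ A C^{1/p} Σ_k m_k + A μ(X)^{1/p} 2^{k₀}`, with `A` depending only on `p`. -/
theorem strong_Lp_of_dyadic_weak_bounds (p : ℝ) (hp : 1 < p) :
    ∃ A : ℝ, 0 < A ∧
      ∀ (X : Type*) [MeasurableSpace X] (μ : Measure X),
        0 < μ Set.univ → μ Set.univ < ⊤ →
        ∀ C : ℝ, 0 < C →
        ∀ u : X → ℝ, Measurable u →
        ∀ (k₀ : ℤ) (m : ℤ → ℝ), (∀ k, 0 ≤ m k) →
        (∀ k : ℤ, k₀ < k →
          μ {x | (2 : ℝ) ^ k < |u x|} ≤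
            ENNReal.ofReal (C * (2 : ℝ) ^ (-(p * (k : ℝ))) * m k ^ p)) →
        (∀ k : ℤ, k ≤ k₀ →
          μ {x | (2 : ℝ) ^ k < |u x|} ≤
            ENNReal.ofReal (C * (2 : ℝ) ^ (-(p * (k : ℝ))) * m k ^ p) + μ Set.univ) →
        (∫⁻ x, ENNReal.ofReal (|u x| ^ p) ∂μ) ^ (1 / p) ≤
          ENNReal.ofReal (A * C ^ (1 / p)) * (∑' k : ℤ, ENNReal.ofReal (m k)) +
            ENNReal.ofReal A * μ Set.univ ^ (1 / p) *
              ENNReal.ofReal ((2 : ℝ) ^ k₀) := by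
  refine ⟨2, two_pos, fun X _ μ _ _ C hC u hu k₀ m hm hweak _ => ?_⟩
  have hp₀ : 0 < p := by linarith
  have hlayer := lintegral_ofReal_abs_rpow_le_dyadic μ hu hp₀.le (k₀ + 1)
  have htail := tsum_dyadic_weight_le hp₀.le hC.le hm (k₀ + 1)
    (b := fun k => μ {x | (2 : ℝ) ^ k < |u x|}) fun k hk => hweak k (by omega)
  have hsum : (∑' k, ENNReal.ofReal (m k) ^ p) ^ (1 / p) ≤ ∑' k, ENNReal.ofReal (m k) := by
    simpa only [one_div, rpow_rpow_inv hp₀.ne'] using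
      rpow_le_rpow (tsum_rpow_le_rpow_tsum _ hp.le) (inv_nonneg.2 hp₀.le)
  calc (∫⁻ x, ENNReal.ofReal (|u x| ^ p) ∂μ) ^ (1 / p)
      ≤ (ENNReal.ofReal ((2 : ℝ) ^ (k₀ + 1)) ^ p * μ Set.univ +
          2 ^ p * (ENNReal.ofReal C * ∑' k, ENNReal.ofReal (m k) ^ p)) ^ (1 / p) := by
        gcongr
        exact hlayer.trans (add_le_add_right htail _)
    _ ≤ ENNReal.ofReal ((2 : ℝ) ^ (k₀ + 1)) * μ Set.univ ^ (1 / p) +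
          2 * (ENNReal.ofReal C * ∑' k, ENNReal.ofReal (m k) ^ p) ^ (1 / p) := by
        rw [← rpow_mul_rpow_one_div hp₀, ← rpow_mul_rpow_one_div hp₀]
        exact rpow_add_le_add_rpow _ _ (by positivity) ((div_le_one hp₀).2 hp.le)
    _ ≤ _ := by
        rw [add_comm, mul_rpow_of_nonneg _ _ (by positivity),
          ofReal_rpow_of_nonneg hC.le (by positivity), ofReal_mul zero_le_two,
          zpow_add_one₀ two_ne_zero, mul_comm _ (2 : ℝ), ofReal_mul zero_le_two, ofReal_ofNat]
        gcongr ?_ + ?_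
        · rw [mul_assoc]
          gcongr
        · rw [mul_right_comm]
end
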